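/- arXiv:1912.13053 — 7 statements merged into one kernel-verified Lean document; each statement's English description precedes it below -/
import Mathlib

section
/- Let 0 < χ < 1 and C ≥ 0 be real numbers, and let (ε_l)_{l≥0} be a sequence of real numbers satisfying |ε_{l+1} − χ·ε_l| ≤ C·ε_l² for all l ≥ 0 and the a priori bound |ε_l| ≤ K·χ^l for all l ≥ 0 with some constant K ≥ 0. Then the limit ζ = lim_{l→∞} χ^{−l}·ε_l exists, and there is a constant C′ ≥ 0 such that |χ^{−l}·ε_l − ζ| ≤ C′·χ^l for all l ≥ 0. -/
/-!
Rescaling by `χ⁻ˡ` turns the recursion into an increment bound: the step of `ε l / χ ^ l` is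
`(ε (l + 1) - χ * ε l) / χ ^ (l + 1)`, of size at most `C * (K * χ ^ l) ^ 2 / χ ^ (l + 1)`,
i.e. `O(χ ^ l)`. A sequence with geometrically small increments converges, and its distance
to the limit is bounded by the geometric tail of the increments.
-/

open Filter Topology

theorem exists_tendsto_dist_le_geometric {α : Type*} [PseudoMetricSpace α] [CompleteSpace α]
    {r D : ℝ} (hr : r < 1) {a : ℕ → α} (ha : ∀ n, dist (a n) (a (n + 1)) ≤ D * r ^ n) :
    ∃ ζ, Tendsto a atTop (𝓝 ζ) ∧ ∃ C', 0 ≤ C' ∧ ∀ n, dist (a n) ζ ≤ C' * r ^ n := by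
  obtain ⟨ζ, hζ⟩ := cauchySeq_tendsto_of_complete (cauchySeq_of_le_geometric r D hr ha)
  have hD : 0 ≤ D := by simpa using dist_nonneg.trans (ha 0)
  refine ⟨ζ, hζ, D / (1 - r), div_nonneg hD (sub_nonneg.2 hr.le), fun n => ?_⟩
  calc dist (a n) ζ ≤ D * r ^ n / (1 - r) := dist_le_of_le_geometric_of_tendsto r D hr ha hζ n
    _ = D / (1 - r) * r ^ n := by ring

theorem div_pow_succ_sub_div_pow {χ : ℝ} (hχ : χ ≠ 0) (x y : ℝ) (l : ℕ) :
    y / χ ^ (l + 1) - x / χ ^ l = (y - χ * x) / χ ^ (l + 1) := by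
  field_simp
  ring

theorem abs_div_pow_succ_sub_div_pow_le {χ C K x y : ℝ} (hχ : 0 < χ) (hC : 0 ≤ C) {l : ℕ}
    (hxy : |y - χ * x| ≤ C * x ^ 2) (hx : |x| ≤ K * χ ^ l) :
    |y / χ ^ (l + 1) - x / χ ^ l| ≤ C * K ^ 2 / χ * χ ^ l := by
  have hx2 : x ^ 2 ≤ (K * χ ^ l) ^ 2 := sq_abs x ▸ pow_le_pow_left₀ (abs_nonneg x) hx 2
  calc |y / χ ^ (l + 1) - x / χ ^ l| = |y - χ * x| / χ ^ (l + 1) := by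
        rw [div_pow_succ_sub_div_pow hχ.ne', abs_div, abs_of_pos (pow_pos hχ _)]
    _ ≤ C * (K * χ ^ l) ^ 2 / χ ^ (l + 1) := by
        gcongr
        exact hxy.trans (mul_le_mul_of_nonneg_left hx2 hC)
    _ = C * K ^ 2 / χ * χ ^ l := by
        field_simp
        ring

theorem chaotic_phase_epsilon_convergence_general
    (χ C K : ℝ) (hχ0 : 0 < χ) (hχ1 : χ < 1) (hC : 0 ≤ C)
    (ε : ℕ → ℝ)
    (hrec : ∀ l : ℕ, |ε (l + 1) - χ * ε l| ≤ C * (ε l) ^ 2)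
    (hbound : ∀ l : ℕ, |ε l| ≤ K * χ ^ l) :
    ∃ ζ : ℝ, Tendsto (fun l : ℕ => ε l / χ ^ l) atTop (𝓝 ζ) ∧
      ∃ C' : ℝ, 0 ≤ C' ∧ ∀ l : ℕ, |ε l / χ ^ l - ζ| ≤ C' * χ ^ l := by
  have hstep : ∀ l : ℕ, dist (ε l / χ ^ l) (ε (l + 1) / χ ^ (l + 1)) ≤ C * K ^ 2 / χ * χ ^ l :=
    fun l => by
      rw [dist_comm, Real.dist_eq]
      exact abs_div_pow_succ_sub_div_pow_le hχ0 hC (hrec l) (hbound l)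
  simpa only [Real.dist_eq] using exists_tendsto_dist_le_geometric hχ1 hstep

/-- **Chaotic-phase convergence (first half of Lemma 1).**
If `0 < χ < 1`, `C ≥ 0`, and the sequence `ε` satisfies
`|ε (l+1) - χ * ε l| ≤ C * (ε l)^2` together with the a priori bound
`|ε l| ≤ K * χ ^ l`, then `ζ = lim_{l → ∞} χ⁻ˡ * ε l` exists and
`|χ⁻ˡ * ε l - ζ| ≤ C' * χ ^ l` for some constant `C' ≥ 0`. -/
theorem chaotic_phase_epsilon_convergence
    (χ C K : ℝ) (hχ0 : 0 < χ) (hχ1 : χ < 1) (hC : 0 ≤ C) (hK : 0 ≤ K)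
    (ε : ℕ → ℝ)
    (hrec : ∀ l : ℕ, |ε (l + 1) - χ * ε l| ≤ C * (ε l) ^ 2)
    (hbound : ∀ l : ℕ, |ε l| ≤ K * χ ^ l) :
    ∃ ζ : ℝ, Tendsto (fun l : ℕ => ε l / χ ^ l) atTop (𝓝 ζ) ∧
      ∃ C' : ℝ, 0 ≤ C' ∧ ∀ l : ℕ, |ε l / χ ^ l - ζ| ≤ C' * χ ^ l :=
  chaotic_phase_epsilon_convergence_general χ C K hχ0 hχ1 hC ε hrec hbound
end

section
/- Let 0 < χ < 1, C ≥ 0, K ≥ 0, b ∈ ℝ. Let (ε_l)_{l≥0} satisfy |ε_{l+1} − χ·ε_l| ≤ C·ε_l² and |ε_l| ≤ K·χ^l for all l ≥ 0, and let ζ = lim_{l→∞} χ^{−l}·ε_l (which exists). Let (δ_l)_{l≥0} satisfy δ_{l+1} = b·ε_{l+1} + χ·δ_l + r_l with |r_l| ≤ C·ε_l² for all l ≥ 0. Then the sequence χ^{−l}·δ_l − l·b·ζ converges to some real number η, with a rate |χ^{−l}·δ_l − l·b·ζ − η| ≤ C′·χ^l for some constant C′ and all l ≥ 0; in particular lim_{l→∞}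 l^{−1}·χ^{−l}·δ_l = b·ζ. -/
/-!
Rescale by `χ⁻ˡ`. The recursion for `ε` says that consecutive terms of `e l = ε l / χ ^ l`
differ by `O(ε l ² / χ ^ l) = O(χ ^ l)`, so `e` converges to `ζ` at rate `χ ^ l`. For `δ`,
the rescaled recursion reads `δ (l+1) / χ ^ (l+1) - δ l / χ ^ l = b * e (l+1) + O(χ ^ l)`,
so after subtracting the linear drift `l * b * ζ` the increments are
`b * (e (l+1) - ζ) + O(χ ^ l) = O(χ ^ l)`, and a sequence with geometrically small
increments converges at the same geometric rate.
-/

open Filter Topology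

section GeometricIncrements

variable {u : ℕ → ℝ} {χ B : ℝ}

theorem exists_tendsto_of_abs_sub_succ_le_geometric (hχ1 : χ < 1)
    (hu : ∀ l, |u l - u (l + 1)| ≤ B * χ ^ l) : ∃ η, Tendsto u atTop (𝓝 η) :=
  cauchySeq_tendsto_of_complete <|
    cauchySeq_of_le_geometric χ B hχ1 fun l => (Real.dist_eq _ _).trans_le (hu l)

theorem abs_sub_le_of_abs_sub_succ_le_geometric {η : ℝ} (hχ1 : χ < 1)
    (hu : ∀ l, |u l - u (l + 1)| ≤ B * χ ^ l) (hη : Tendsto u atTop (𝓝 η)) (l : ℕ) :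
    |u l - η| ≤ B / (1 - χ) * χ ^ l := by
  have := dist_le_of_le_geometric_of_tendsto χ B hχ1
    (fun l => (Real.dist_eq _ _).trans_le (hu l)) hη l
  rwa [Real.dist_eq, mul_div_right_comm] at this

end GeometricIncrements

theorem tendsto_inv_mul_of_tendsto_sub_nat_mul {u : ℕ → ℝ} {c η : ℝ}
    (hu : Tendsto (fun l : ℕ => u l - l * c) atTop (𝓝 η)) :
    Tendsto (fun l : ℕ => (l : ℝ)⁻¹ * u l) atTop (𝓝 c) := by
  have hlim : Tendsto (fun l : ℕ => (l : ℝ)⁻¹ * (u l - l * c) + c) atTop (𝓝 c) := by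
    simpa using (tendsto_inv_atTop_nhds_zero_nat.mul hu).add_const c
  refine hlim.congr' ?_
  filter_upwards [eventually_ne_atTop 0] with l hl
  have hl : (l : ℝ) ≠ 0 := Nat.cast_ne_zero.mpr hl
  field_simp
  ring

section Rescaling

variable {χ : ℝ}

theorem div_pow_sub_div_pow_succ (hχ : χ ≠ 0) (x : ℕ → ℝ) (l : ℕ) :
    x l / χ ^ l - x (l + 1) / χ ^ (l + 1) = -((x (l + 1) - χ * x l) / χ ^ (l + 1)) := by
  field_simp
  ring

theorem abs_div_pow_succ_le_of_le_sq (hχ : 0 < χ) {C K y z : ℝ} {l : ℕ} (hC : 0 ≤ C)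
    (hy : |y| ≤ C * z ^ 2) (hz : |z| ≤ K * χ ^ l) :
    |y / χ ^ (l + 1)| ≤ C * K ^ 2 / χ * χ ^ l := by
  have hsq : z ^ 2 ≤ (K * χ ^ l) ^ 2 := sq_le_sq' (abs_le.mp hz).1 (abs_le.mp hz).2
  rw [abs_div, abs_of_pos (pow_pos hχ _), div_le_iff₀ (pow_pos hχ _)]
  calc |y| ≤ C * (K * χ ^ l) ^ 2 := hy.trans (mul_le_mul_of_nonneg_left hsq hC)
    _ = C * K ^ 2 / χ * χ ^ l * χ ^ (l + 1) := by field_simp; ring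

theorem abs_rescaled_drift_sub_succ_le (hχ : 0 < χ) {b ζ A D : ℝ} {ε δ r : ℕ → ℝ}
    {l : ℕ}
    (hδ : δ (l + 1) = b * ε (l + 1) + χ * δ l + r l)
    (hε : |ε (l + 1) / χ ^ (l + 1) - ζ| ≤ A * χ ^ (l + 1))
    (hr : |r l / χ ^ (l + 1)| ≤ D * χ ^ l) :
    |(δ l / χ ^ l - l * b * ζ) -
        (δ (l + 1) / χ ^ (l + 1) - ((l + 1 : ℕ) : ℝ) * b * ζ)| ≤
      (|b| * A * χ + D) * χ ^ l := by
  have hstep :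
      (δ l / χ ^ l - l * b * ζ) - (δ (l + 1) / χ ^ (l + 1) - ((l + 1 : ℕ) : ℝ) * b * ζ) =
        -(b * (ε (l + 1) / χ ^ (l + 1) - ζ) + r l / χ ^ (l + 1)) := by
    rw [sub_sub_sub_comm, div_pow_sub_div_pow_succ hχ.ne', hδ]
    push_cast
    ring
  rw [hstep, abs_neg]
  calc |b * (ε (l + 1) / χ ^ (l + 1) - ζ) + r l / χ ^ (l + 1)|
      ≤ |b| * (A * χ ^ (l + 1)) + D * χ ^ l := by
        refine (abs_add_le _ _).trans (add_le_add ?_ hr)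
        rw [abs_mul]
        exact mul_le_mul_of_nonneg_left hε (abs_nonneg b)
    _ = (|b| * A * χ + D) * χ ^ l := by ring

end Rescaling

theorem chaotic_phase_delta_convergence_general
    (χ C K b ζ : ℝ) (hχ0 : 0 < χ) (hχ1 : χ < 1) (hC : 0 ≤ C)
    (ε δ r : ℕ → ℝ)
    (hrec : ∀ l : ℕ, |ε (l + 1) - χ * ε l| ≤ C * (ε l) ^ 2)
    (hbound : ∀ l : ℕ, |ε l| ≤ K * χ ^ l)
    (hζ : Tendsto (fun l : ℕ => ε l / χ ^ l) atTop (𝓝 ζ))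
    (hδ : ∀ l : ℕ, δ (l + 1) = b * ε (l + 1) + χ * δ l + r l)
    (hr : ∀ l : ℕ, |r l| ≤ C * (ε l) ^ 2) :
    ∃ η : ℝ, Tendsto (fun l : ℕ => δ l / χ ^ l - (l : ℝ) * b * ζ) atTop (𝓝 η) ∧
      (∃ C' : ℝ, ∀ l : ℕ, |δ l / χ ^ l - (l : ℝ) * b * ζ - η| ≤ C' * χ ^ l) ∧
      Tendsto (fun l : ℕ => ((l : ℝ))⁻¹ * (δ l / χ ^ l)) atTop (𝓝 (b * ζ)) := by
  set D := C * K ^ 2 / χ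
  have hε_step : ∀ l, |ε l / χ ^ l - ε (l + 1) / χ ^ (l + 1)| ≤ D * χ ^ l := fun l => by
    rw [div_pow_sub_div_pow_succ hχ0.ne', abs_neg]
    exact abs_div_pow_succ_le_of_le_sq hχ0 hC (hrec l) (hbound l)
  have hε_rate := abs_sub_le_of_abs_sub_succ_le_geometric hχ1 hε_step hζ
  set v : ℕ → ℝ := fun l => δ l / χ ^ l - l * b * ζ
  have hδ_step : ∀ l, |v l - v (l + 1)| ≤ (|b| * (D / (1 - χ)) * χ + D) * χ ^ l :=
    fun l => abs_rescaled_drift_sub_succ_le hχ0 (hδ l) (hε_rate (l + 1))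
      (abs_div_pow_succ_le_of_le_sq hχ0 hC (hr l) (hbound l))
  obtain ⟨η, hη⟩ := exists_tendsto_of_abs_sub_succ_le_geometric hχ1 hδ_step
  refine ⟨η, hη, ⟨_, abs_sub_le_of_abs_sub_succ_le_geometric hχ1 hδ_step hη⟩, ?_⟩
  exact tendsto_inv_mul_of_tendsto_sub_nat_mul (by simpa only [v, mul_assoc] using hη)

/-- **Chaotic-phase convergence (second half of Lemma 1 / Lemma 2).**
With `0 < χ < 1`, `ε` as in the first half of the lemma with limit
`ζ = lim χ⁻ˡ ε l`, and `δ` satisfying `δ (l+1) = b * ε (l+1) + χ * δ l + r l`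
with `|r l| ≤ C * (ε l)^2`, the sequence `χ⁻ˡ * δ l - l * b * ζ` converges to
some `η` at rate `χ ^ l`; in particular `l⁻¹ * χ⁻ˡ * δ l → b * ζ`. -/
theorem chaotic_phase_delta_convergence
    (χ C K b ζ : ℝ) (hχ0 : 0 < χ) (hχ1 : χ < 1) (hC : 0 ≤ C) (hK : 0 ≤ K)
    (ε δ r : ℕ → ℝ)
    (hrec : ∀ l : ℕ, |ε (l + 1) - χ * ε l| ≤ C * (ε l) ^ 2)
    (hbound : ∀ l : ℕ, |ε l| ≤ K * χ ^ l)
    (hζ : Tendsto (fun l : ℕ => ε l / χ ^ l) atTop (𝓝 ζ))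
    (hδ : ∀ l : ℕ, δ (l + 1) = b * ε (l + 1) + χ * δ l + r l)
    (hr : ∀ l : ℕ, |r l| ≤ C * (ε l) ^ 2) :
    ∃ η : ℝ, Tendsto (fun l : ℕ => δ l / χ ^ l - (l : ℝ) * b * ζ) atTop (𝓝 η) ∧
      (∃ C' : ℝ, ∀ l : ℕ, |δ l / χ ^ l - (l : ℝ) * b * ζ - η| ≤ C' * χ ^ l) ∧
      Tendsto (fun l : ℕ => ((l : ℝ))⁻¹ * (δ l / χ ^ l)) atTop (𝓝 (b * ζ)) :=
  chaotic_phase_delta_convergence_general χ C K b ζ hχ0 hχ1 hC ε δ r hrec hbound hζ hδ hr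
end

section
/- Let a > 0 and β > 0 be real numbers, C ≥ 0, and let (x_l)_{l≥0} be a sequence of strictly positive real numbers with x_l → 0 such that |x_{l+1} − x_l + a·x_l^{1+β}| ≤ C·x_l^{1+2β} for all l. Then lim_{l→∞} l^{1/β}·x_l = (a·β)^{−1/β}. -/
open Filter Topology

/-! With `y l = x l ^ (-β)` the recursion linearizes: since `x (l+1) / x l = 1 - a x l ^ β + O(x l ^ (2β))`
and `r ↦ r ^ (-β)` has derivative `-β` at `1`, the increments `y (l+1) - y l` tend to `a β`.
By Stolz–Cesàro `y l / l → a β`, and raising to the power `-1/β` gives the claim. -/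

theorem tendsto_div_natCast_of_tendsto_sub {u : ℕ → ℝ} {L : ℝ}
    (h : Tendsto (fun n => u (n + 1) - u n) atTop (𝓝 L)) :
    Tendsto (fun n : ℕ => u n / n) atTop (𝓝 L) := by
  have hmean : Tendsto (fun n : ℕ => (n : ℝ)⁻¹ * (u n - u 0)) atTop (𝓝 L) :=
    h.cesaro.congr fun n => by rw [Finset.sum_range_sub u]
  have hinit : Tendsto (fun n : ℕ => (n : ℝ)⁻¹ * u 0) atTop (𝓝 0) := by
    simpa using tendsto_inv_atTop_nhds_zero_nat.mul_const (u 0)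
  simpa [div_eq_inv_mul, mul_sub] using hmean.add hinit

theorem abs_ratio_sub_one_div_rpow_add_le {a β C x y : ℝ} (hx : 0 < x)
    (h : |y - x + a * x ^ (1 + β)| ≤ C * x ^ (1 + 2 * β)) :
    |(y / x - 1) / x ^ β + a| ≤ C * x ^ β := by
  have hxβ : 0 < x * x ^ β := mul_pos hx (Real.rpow_pos_of_pos hx β)
  have h1 : x ^ (1 + β) = x * x ^ β := by rw [Real.rpow_add hx, Real.rpow_one]
  have h2 : x ^ (1 + 2 * β) = x * x ^ β * x ^ β := by
    rw [show (1 : ℝ) + 2 * β = 1 + β + β by ring, Real.rpow_add hx, h1]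
  have heq : (y / x - 1) / x ^ β + a = (y - x + a * x ^ (1 + β)) / (x * x ^ β) := by
    rw [h1]
    field_simp
  rw [heq, abs_div, abs_of_pos hxβ, div_le_iff₀ hxβ]
  calc |y - x + a * x ^ (1 + β)| ≤ C * x ^ (1 + 2 * β) := h
    _ = C * x ^ β * (x * x ^ β) := by rw [h2]; ring

theorem tendsto_rpow_neg_sub_of_tendsto_ratio {x : ℕ → ℝ} {a β : ℝ} (ha : a ≠ 0)
    (hx : ∀ l, 0 < x l) (hxβ : Tendsto (fun l => x l ^ β) atTop (𝓝 0))
    (hratio : Tendsto (fun l => (x (l + 1) / x l - 1) / x l ^ β) atTop (𝓝 (-a))) :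
    Tendsto (fun l => x (l + 1) ^ (-β) - x l ^ (-β)) atTop (𝓝 (a * β)) := by
  set r : ℕ → ℝ := fun l => x (l + 1) / x l
  change Tendsto (fun l => (r l - 1) / x l ^ β) atTop _ at hratio
  have hxβ_ne (l : ℕ) : x l ^ β ≠ 0 := (Real.rpow_pos_of_pos (hx l) β).ne'
  have hr_ne : ∀ᶠ l in atTop, r l ≠ 1 := by
    filter_upwards [hratio.eventually_ne (neg_ne_zero.mpr ha)] with l hl
    intro h
    simp [h] at hl
  have hr_one : Tendsto r atTop (𝓝 1) := by
    have h := (hratio.mul hxβ).add_const 1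
    rw [mul_zero, zero_add] at h
    exact h.congr fun l => by field_simp [hxβ_ne l]; ring
  have hslope : Tendsto (fun l => slope (fun s : ℝ => s ^ (-β)) 1 (r l)) atTop (𝓝 (-β)) := by
    have hderiv : HasDerivAt (fun s : ℝ => s ^ (-β)) (-β) 1 := by
      simpa using Real.hasDerivAt_rpow_const (x := 1) (p := -β) (Or.inl one_ne_zero)
    exact hderiv.tendsto_slope.comp (tendsto_nhdsWithin_iff.mpr ⟨hr_one, hr_ne⟩)
  have h := hslope.mul hratio
  rw [neg_mul_neg, mul_comm β] at h
  refine h.congr' ?_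
  filter_upwards [hr_ne] with l hl
  have hsucc : x (l + 1) ^ (-β) = x l ^ (-β) * r l ^ (-β) := by
    rw [← Real.mul_rpow (hx l).le (div_pos (hx _) (hx l)).le, mul_div_cancel₀ _ (hx l).ne']
  rw [slope_def_field, hsucc, Real.rpow_neg (hx l).le, Real.one_rpow]
  field_simp [sub_ne_zero.mpr hl]

theorem tendsto_natCast_rpow_mul_of_tendsto_rpow_neg_div {x : ℕ → ℝ} {β L : ℝ} (hβ : β ≠ 0)
    (hL : L ≠ 0) (hx : ∀ l, 0 < x l)
    (h : Tendsto (fun n : ℕ => x n ^ (-β) / n) atTop (𝓝 L)) :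
    Tendsto (fun n : ℕ => (n : ℝ) ^ (1 / β) * x n) atTop (𝓝 (L ^ (-(1 / β)))) := by
  refine (h.rpow_const (Or.inl hL)).congr fun n => ?_
  rw [Real.div_rpow (Real.rpow_nonneg (hx n).le _) n.cast_nonneg, ← Real.rpow_mul (hx n).le,
    show -β * -(1 / β) = 1 by field_simp, Real.rpow_one, Real.rpow_neg n.cast_nonneg,
    div_inv_eq_mul, mul_comm]

theorem critical_powerlaw_decay_general
    (a β C : ℝ) (ha : 0 < a) (hβ : 0 < β)
    (x : ℕ → ℝ) (hxpos : ∀ l : ℕ, 0 < x l)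
    (hx0 : Tendsto x atTop (𝓝 0))
    (hrec : ∀ l : ℕ, |x (l + 1) - x l + a * x l ^ (1 + β)| ≤ C * x l ^ (1 + 2 * β)) :
    Tendsto (fun l : ℕ => (l : ℝ) ^ (1 / β) * x l) atTop (𝓝 ((a * β) ^ (-(1 / β)))) := by
  have hxβ : Tendsto (fun l => x l ^ β) atTop (𝓝 0) := by
    simpa [Real.zero_rpow hβ.ne'] using hx0.rpow_const (Or.inr hβ.le)
  have hratio : Tendsto (fun l => (x (l + 1) / x l - 1) / x l ^ β) atTop (𝓝 (-a)) := by
    have h := squeeze_zero_norm (f := fun l => (x (l + 1) / x l - 1) / x l ^ β + a)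
      (fun l => by simpa only [Real.norm_eq_abs]
        using abs_ratio_sub_one_div_rpow_add_le (hxpos l) (hrec l))
      (by simpa using hxβ.const_mul C)
    simpa using h.sub_const a
  exact tendsto_natCast_rpow_mul_of_tendsto_rpow_neg_div hβ.ne' (mul_pos ha hβ).ne' hxpos
    (tendsto_div_natCast_of_tendsto_sub
      (tendsto_rpow_neg_sub_of_tendsto_ratio ha.ne' hxpos hxβ hratio))

/-- **Power-law decay from the critical recursion.**
If `a, β > 0`, `C ≥ 0` and the positive sequence `x` tends to `0` and satisfies
`|x (l+1) - x l + a * (x l)^(1+β)| ≤ C * (x l)^(1+2β)`, then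
`l^(1/β) * x l → (a * β)^(-1/β)`. -/
theorem critical_powerlaw_decay
    (a β C : ℝ) (ha : 0 < a) (hβ : 0 < β) (hC : 0 ≤ C)
    (x : ℕ → ℝ) (hxpos : ∀ l : ℕ, 0 < x l)
    (hx0 : Tendsto x atTop (𝓝 0))
    (hrec : ∀ l : ℕ, |x (l + 1) - x l + a * x l ^ (1 + β)| ≤ C * x l ^ (1 + 2 * β)) :
    Tendsto (fun l : ℕ => (l : ℝ) ^ (1 / β) * x l) atTop (𝓝 ((a * β) ^ (-(1 / β)))) :=
  critical_powerlaw_decay_general a β C ha hβ x hxpos hx0 hrec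
end

section
/- Let α > −1 and d ∈ ℝ. Let (c_l)_{l≥1} and (d_l)_{l≥1} be real sequences with l·c_l → −α, d_l → d, and 1 + c_l > 0 for all l. Let (x_l) satisfy x_{l+1} = (1 + c_l)·x_l + d_l for all l ≥ 1. Then lim_{l→∞} x_l / l = d / (1 + α). -/
/-!
Rescale to `z l = x l / l - d / (1 + α)`. Then `z (l + 1) = a l * z l + r l` with
`l * (a l - 1) → -(1 + α) < 0` and `l * r l → 0`, so for large `l` the recursion contracts by a
factor `1 - γ / l` while adding an error of order `γ η / l`. The excess of `|z l|` over `η` then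
decays like `exp (-γ ∑ 1 / k)`, which tends to `0` because the harmonic series diverges.
-/

open Filter Topology

theorem tendsto_sum_Ico_one_div_atTop (N : ℕ) :
    Tendsto (fun l => ∑ k ∈ Finset.Ico N l, (1 : ℝ) / k) atTop atTop := by
  have harmonic : Tendsto (fun l => ∑ k ∈ Finset.range l, (1 : ℝ) / k) atTop atTop := by
    rw [← tendsto_add_atTop_iff_nat 1]
    refine Real.tendsto_sum_range_one_div_nat_succ_atTop.congr fun n => ?_
    simp [Finset.sum_range_succ']
  refine (tendsto_atTop_add_const_right atTop
    (-∑ k ∈ Finset.range N, (1 : ℝ) / k) harmonic).congr' ?_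
  filter_upwards [eventually_ge_atTop N] with l hl
  rw [Finset.sum_Ico_eq_sub _ hl, sub_eq_add_neg]

theorem tendsto_zero_of_le_one_sub_div_mul {γ : ℝ} (hγ : 0 < γ) {w : ℕ → ℝ}
    (hw : ∀ l, 0 ≤ w l) (hrec : ∀ᶠ l in atTop, w (l + 1) ≤ (1 - γ / l) * w l) :
    Tendsto w atTop (𝓝 0) := by
  obtain ⟨N, hN⟩ := eventually_atTop.mp hrec
  set S : ℕ → ℝ := fun l => ∑ k ∈ Finset.Ico N l, (1 : ℝ) / k with hS
  have hbound : ∀ l, N ≤ l → w l ≤ w N * Real.exp (-γ * S l) := by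
    intro l hl
    induction l, hl using Nat.le_induction with
    | base => simp [hS]
    | succ n hn ih =>
      have hSn : S (n + 1) = S n + 1 / n := by simp [hS, Finset.sum_Ico_succ_top hn]
      calc w (n + 1) ≤ (1 - γ / n) * w n := hN n hn
        _ ≤ Real.exp (-(γ / n)) * w n := by
          gcongr
          · exact hw n
          · linarith [Real.add_one_le_exp (-(γ / n))]
        _ ≤ Real.exp (-(γ / n)) * (w N * Real.exp (-γ * S n)) := by gcongr
        _ = w N * Real.exp (-γ * S (n + 1)) := by
          rw [hSn, show -γ * (S n + 1 / n) = -(γ / n) + -γ * S n by ring, Real.exp_add]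
          ring
  have hexp : Tendsto (fun l => w N * Real.exp (-γ * S l)) atTop (𝓝 0) := by
    have hS_top : Tendsto (fun l => -γ * S l) atTop atBot :=
      (tendsto_sum_Ico_one_div_atTop N).const_mul_atTop_of_neg (neg_neg_of_pos hγ)
    simpa using (Real.tendsto_exp_atBot.comp hS_top).const_mul (w N)
  exact squeeze_zero' (Eventually.of_forall hw) (eventually_atTop.mpr ⟨N, hbound⟩) hexp

theorem eventually_abs_lt_add_of_contraction {γ η : ℝ} (hγ : 0 < γ) {a r z : ℕ → ℝ}
    (ha : ∀ᶠ l in atTop, |a l| ≤ 1 - γ / l) (hr : ∀ᶠ l in atTop, |r l| ≤ γ / l * η)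
    (hrec : ∀ᶠ l in atTop, z (l + 1) = a l * z l + r l) {ε : ℝ} (hε : 0 < ε) :
    ∀ᶠ l in atTop, |z l| < η + ε := by
  set w : ℕ → ℝ := fun l => max (|z l| - η) 0
  have hw : ∀ l, 0 ≤ w l := fun l => le_max_right _ _
  have hwrec : ∀ᶠ l in atTop, w (l + 1) ≤ (1 - γ / l) * w l := by
    filter_upwards [ha, hr, hrec] with l hal hrl hzl
    have hcontr : 0 ≤ 1 - γ / l := (abs_nonneg _).trans hal
    have hz : |z (l + 1)| ≤ (1 - γ / l) * |z l| + γ / l * η :=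
      calc |z (l + 1)| ≤ |a l| * |z l| + |r l| := by
            rw [hzl, ← abs_mul]; exact abs_add_le _ _
        _ ≤ (1 - γ / l) * |z l| + γ / l * η := by gcongr
    have hwl : (1 - γ / l) * (|z l| - η) ≤ (1 - γ / l) * w l :=
      mul_le_mul_of_nonneg_left (le_max_left _ _) hcontr
    exact max_le (by linarith) (mul_nonneg hcontr (hw l))
  filter_upwards [(tendsto_zero_of_le_one_sub_div_mul hγ hw hwrec).eventually
    (gt_mem_nhds hε)] with l hl
  linarith [le_max_left (|z l| - η) 0]

theorem eventually_abs_le_one_sub_div {β γ : ℝ} (hγ : γ < β) {a : ℕ → ℝ}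
    (ha : Tendsto (fun l : ℕ => (l : ℝ) * (a l - 1)) atTop (𝓝 (-β))) :
    ∀ᶠ l : ℕ in atTop, |a l| ≤ 1 - γ / l := by
  have ha_one : Tendsto a atTop (𝓝 1) := by
    have h := (ha.mul (tendsto_inv_atTop_nhds_zero_nat (𝕜 := ℝ))).add_const 1
    rw [mul_zero, zero_add] at h
    refine h.congr' ?_
    filter_upwards [eventually_ge_atTop 1] with l hl
    have : (l : ℝ) ≠ 0 := by positivity
    field_simp
    ring
  filter_upwards [ha.eventually_le_const (neg_lt_neg hγ), ha_one.eventually_const_le one_pos,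
    eventually_ge_atTop 1] with l hle hnonneg hl
  have hl' : (0 : ℝ) < l := by exact_mod_cast hl
  rw [abs_of_nonneg (by linarith), sub_div' hl'.ne', le_div_iff₀ hl']
  nlinarith

theorem tendsto_zero_of_affine_recurrence {β : ℝ} (hβ : 0 < β) {a r z : ℕ → ℝ}
    (ha : Tendsto (fun l : ℕ => (l : ℝ) * (a l - 1)) atTop (𝓝 (-β)))
    (hr : Tendsto (fun l : ℕ => (l : ℝ) * r l) atTop (𝓝 0))
    (hrec : ∀ᶠ l in atTop, z (l + 1) = a l * z l + r l) :
    Tendsto z atTop (𝓝 0) := by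
  have hγ : 0 < β / 2 := half_pos hβ
  rw [Metric.tendsto_nhds]
  intro ε hε
  have hr_small : ∀ᶠ l : ℕ in atTop, |r l| ≤ β / 2 / l * (ε / 2) := by
    have habs : Tendsto (fun l : ℕ => |(l : ℝ) * r l|) atTop (𝓝 0) := by simpa using hr.abs
    filter_upwards [habs.eventually_le_const
      (by positivity : (0 : ℝ) < β / 2 * (ε / 2)), eventually_ge_atTop 1] with l hle hl
    have hl' : (0 : ℝ) < l := by exact_mod_cast hl
    rw [abs_mul, abs_of_pos hl'] at hle
    rw [div_mul_eq_mul_div, le_div_iff₀ hl']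
    linarith
  filter_upwards [eventually_abs_lt_add_of_contraction hγ
    (eventually_abs_le_one_sub_div (half_lt_self hβ) ha) hr_small hrec (half_pos hε)] with l hl
  rw [Real.dist_eq, sub_zero]
  linarith

theorem critical_line_linear_growth_general
    (α d : ℝ) (hα : -1 < α)
    (c dseq x : ℕ → ℝ)
    (hc : Tendsto (fun l : ℕ => (l : ℝ) * c l) atTop (𝓝 (-α)))
    (hd : Tendsto dseq atTop (𝓝 d))
    (hrec : ∀ l : ℕ, 1 ≤ l → x (l + 1) = (1 + c l) * x l + dseq l) :
    Tendsto (fun l : ℕ => x l / (l : ℝ)) atTop (𝓝 (d / (1 + α))) := by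
  have hβ : 0 < 1 + α := by linarith
  set L := d / (1 + α) with hL
  set a : ℕ → ℝ := fun l => l * (1 + c l) / (l + 1)
  set r : ℕ → ℝ := fun l => (a l - 1) * L + dseq l / (l + 1)
  set z : ℕ → ℝ := fun l => x l / l - L
  have hfrac : Tendsto (fun l : ℕ => (l : ℝ) / (l + 1)) atTop (𝓝 1) :=
    tendsto_natCast_div_add_atTop 1
  have ha : Tendsto (fun l : ℕ => (l : ℝ) * (a l - 1)) atTop (𝓝 (-(1 + α))) := by
    have h := hfrac.mul (hc.sub_const 1)
    rw [show (1 : ℝ) * (-α - 1) = -(1 + α) by ring] at h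
    refine h.congr fun l => ?_
    simp only [a]
    field_simp
    ring
  have hr : Tendsto (fun l : ℕ => (l : ℝ) * r l) atTop (𝓝 0) := by
    have h := (ha.mul_const L).add (hfrac.mul hd)
    rw [show -(1 + α) * L + 1 * d = 0 by rw [hL]; field_simp; ring] at h
    refine h.congr fun l => ?_
    simp only [r]
    field_simp
  have hz : ∀ᶠ l in atTop, z (l + 1) = a l * z l + r l := by
    filter_upwards [eventually_ge_atTop 1] with l hl
    have : (l : ℝ) ≠ 0 := by positivity
    simp only [z, a, r, hrec l hl]
    push_cast
    field_simp
    ring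
  simpa [z] using (tendsto_zero_of_affine_recurrence hβ ha hr hz).add_const L

/-- **Linear growth from a perturbed affine recursion (critical-line NTK).**
If `l * c l → -α` with `α > -1`, `d l → d`, `1 + c l > 0`, and
`x (l+1) = (1 + c l) * x l + d l` for all `l ≥ 1`, then `x l / l → d / (1 + α)`. -/
theorem critical_line_linear_growth
    (α d : ℝ) (hα : -1 < α)
    (c dseq x : ℕ → ℝ)
    (hc : Tendsto (fun l : ℕ => (l : ℝ) * c l) atTop (𝓝 (-α)))
    (hd : Tendsto dseq atTop (𝓝 d))
    (hpos : ∀ l : ℕ, 1 ≤ l → 0 < 1 + c l)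
    (hrec : ∀ l : ℕ, 1 ≤ l → x (l + 1) = (1 + c l) * x l + dseq l) :
    Tendsto (fun l : ℕ => x l / (l : ℝ)) atTop (𝓝 (d / (1 + α))) :=
  critical_line_linear_growth_general α d hα c dseq x hc hd hrec
end

section
/- Let m ≥ 2, 0 < ρ < 1, and 0 ≤ σ_b² < p* be real numbers. The real symmetric m×m matrix M with diagonal entries (1/ρ)·p* + (1 − 1/ρ)·σ_b² and all off-diagonal entries equal to p* is positive definite, and its condition number (largest eigenvalue divided by smallest eigenvalue) equals m·p* / ((1/ρ − 1)·(p* − σ_b²)) + 1. -/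
/-!
Writing `J` for the all-ones matrix, the matrix is `a • 1 + p • J` with
`a = (1/ρ - 1) * (p - σb2) > 0`. If `M v = μ v` and `s = ∑ v`, then `(μ - a) v = p s 𝟙`; so either
`s = 0` and `μ = a`, or summing gives `μ = a + m p`. Both values occur once `m ≥ 2` (take
`eᵢ - eⱼ` and `𝟙`), so the spectrum is `{a, a + m p}`, all eigenvalues are positive, and the
condition number is `(a + m p) / a`.
-/

open Matrix Module

namespace Matrix

variable {K n : Type*} [Field K] [DecidableEq n]

theorem of_ite_eq_smul_one_add_smul_allOnes (d c : K) :
    (of fun i j : n => if i = j then d else c) = (d - c) • 1 + c • of fun _ _ => 1 := by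
  ext i j
  by_cases h : i = j <;> simp [h]

variable [Fintype n]

theorem mem_spectrum_iff_exists_mulVec_eq_smul {A : Matrix n n K} {μ : K} :
    μ ∈ spectrum K A ↔ ∃ v ≠ 0, A *ᵥ v = μ • v := by
  rw [← spectrum_toLin', ← End.hasEigenvalue_iff_mem_spectrum]
  constructor
  · intro h
    obtain ⟨v, hv⟩ := h.exists_hasEigenvector
    exact ⟨v, hv.2, by simpa using hv.apply_eq_smul⟩
  · rintro ⟨v, hv0, hv⟩
    exact End.hasEigenvalue_of_hasEigenvector (End.hasEigenvector_iff.mpr ⟨by simpa using hv, hv0⟩)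

theorem smul_one_add_smul_allOnes_mulVec (a c : K) (v : n → K) :
    (a • 1 + c • of fun _ _ : n => (1 : K)) *ᵥ v = a • v + (c * ∑ i, v i) • fun _ => 1 := by
  rw [add_mulVec, smul_mulVec, smul_mulVec, one_mulVec]
  ext i
  simp [mulVec, dotProduct, Finset.mul_sum]

theorem spectrum_smul_one_add_smul_allOnes [Nontrivial n] (a c : K) :
    spectrum K (a • 1 + c • of fun _ _ : n => (1 : K)) = {a, a + Fintype.card n * c} := by
  ext μ
  simp only [mem_spectrum_iff_exists_mulVec_eq_smul, smul_one_add_smul_allOnes_mulVec,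
    Set.mem_insert_iff, Set.mem_singleton_iff]
  constructor
  · rintro ⟨v, hv0, hv⟩
    have hshift : (μ - a) • v = (c * ∑ i, v i) • fun _ => 1 := by
      rw [sub_smul, ← hv]; abel
    have hsum : (μ - a) * ∑ i, v i = Fintype.card n * c * ∑ i, v i := by
      have := congrArg (fun w : n → K => ∑ i, w i) hshift
      simp only [Pi.smul_apply, smul_eq_mul, ← Finset.mul_sum, mul_one, Finset.sum_const,
        Finset.card_univ, nsmul_eq_mul] at this
      rw [this]; ring
    by_cases hs : ∑ i, v i = 0
    · rw [hs, mul_zero, zero_smul, smul_eq_zero, sub_eq_zero] at hshift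
      exact .inl (hshift.resolve_right hv0)
    · exact .inr (by linear_combination mul_right_cancel₀ hs hsum)
  · rintro (rfl | rfl)
    · obtain ⟨i, j, hij⟩ := exists_pair_ne n
      refine ⟨Pi.single i 1 - Pi.single j 1, fun h => ?_, ?_⟩
      · simpa [hij] using congrFun h i
      · simp
    · refine ⟨fun _ => 1, fun h => one_ne_zero (congrFun h (Classical.arbitrary n)), ?_⟩
      ext i
      simp [mul_comm]

end Matrix

/-- **Dropout improves the conditioning of the limiting NTK.**
For `m ≥ 2`, `0 < ρ < 1` and `0 ≤ σb2 < p`, the symmetric matrix with diagonal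
entries `(1/ρ) * p + (1 - 1/ρ) * σb2` and off-diagonal entries `p` is positive
definite with condition number `m * p / ((1/ρ - 1) * (p - σb2)) + 1`. -/
theorem dropout_ntk_condition_number
    (m : ℕ) (hm : 2 ≤ m) (ρ p σb2 : ℝ)
    (hρ0 : 0 < ρ) (hρ1 : ρ < 1) (hσ0 : 0 ≤ σb2) (hσp : σb2 < p)
    (M : Matrix (Fin m) (Fin m) ℝ)
    (hM : M = Matrix.of fun i j =>
      if i = j then (1 / ρ) * p + (1 - 1 / ρ) * σb2 else p)
    (hHerm : M.IsHermitian) :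
    M.PosDef ∧
      (⨆ i, hHerm.eigenvalues i) / (⨅ i, hHerm.eigenvalues i)
        = (m : ℝ) * p / ((1 / ρ - 1) * (p - σb2)) + 1 := by
  set a := (1 / ρ - 1) * (p - σb2)
  have ha : 0 < a := mul_pos (sub_pos.2 (one_lt_one_div hρ0 hρ1)) (sub_pos.2 hσp)
  have hmp : 0 < (m : ℝ) * p := mul_pos (by positivity) (hσ0.trans_lt hσp)
  have : Nontrivial (Fin m) := Fin.nontrivial_iff_two_le.2 hm
  have hdiag : 1 / ρ * p + (1 - 1 / ρ) * σb2 - p = a := by ring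
  have hrange : Set.range hHerm.eigenvalues = {a, a + m * p} := by
    rw [← hHerm.spectrum_real_eq_range_eigenvalues, hM, of_ite_eq_smul_one_add_smul_allOnes, hdiag,
      spectrum_smul_one_add_smul_allOnes, Fintype.card_fin]
  refine ⟨hHerm.posDef_iff_eigenvalues_pos.2 fun i => ?_, ?_⟩
  · rcases hrange ▸ Set.mem_range_self i with h | h <;> rw [h] <;> linarith
  · rw [← sSup_range, ← sInf_range, hrange, csSup_pair, csInf_pair,
      max_eq_right (by linarith), min_eq_left (by linarith), add_div, div_self ha.ne', add_comm]
end

section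
/- Let m ≥ 2, k ≥ 1, and let Y ∈ ℝ^m satisfy 𝟙ᵀY = 0. Let S ≥ 0 and let (p_l), (s_l), (u_l), (δ_l) be real sequences with p_l → ∞, |s_l| ≤ S, |u_l| ≤ S, 0 ≤ δ_l ≤ S. Let M_l = p_l·Id + s_l·(𝟙𝟙ᵀ − Id) + E_l be real m×m matrices with ‖E_l‖ ≤ δ_l (operator norm), and T_l = u_l·𝟙_k𝟙_mᵀ + F_l real k×m matrices with ‖F_l‖ ≤ δ_l. Then there exist a constant C and an index L such that for all l ≥ L, M_l is invertible and ‖T_l·M_l^{−1}·Y‖ ≤ C·(δ_l + p_l^{−1})·p_l^{−1}·‖Y‖. -/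
open Matrix Filter Topology

/-- The `ℓ²` operator norm of a (possibly rectangular) real matrix. -/
noncomputable def euclideanOpNorm {m k : ℕ} (A : Matrix (Fin k) (Fin m) ℝ) : ℝ :=
  ‖LinearMap.toContinuousLinearMap (Matrix.toEuclideanLin A)‖

/-! For large `p` the train kernel `M` is an `O(1)` perturbation of `p • 1`, hence invertible
with `‖x‖ ≤ 2 ‖Y‖ / p` for `x = M⁻¹ Y`. The test kernel sees `x` only through its coordinate sum
`∑ xᵢ`, up to an error `δ ‖x‖`. Summing the coordinates of `M x = Y` and using `∑ Yᵢ = 0` gives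
`(p + s (m - 1)) ∑ xᵢ = -∑ (E x)ᵢ`, so `∑ xᵢ = O(δ ‖x‖ / p)`, and the test output is
`O(δ ‖Y‖ / p)`. -/

lemma norm_toLp_mulVec_le {a b : ℕ} (A : Matrix (Fin a) (Fin b) ℝ) (v : EuclideanSpace ℝ (Fin b)) :
    ‖(WithLp.toLp 2 (A *ᵥ v) : EuclideanSpace ℝ (Fin a))‖ ≤ euclideanOpNorm A * ‖v‖ :=
  (LinearMap.toContinuousLinearMap (Matrix.toEuclideanLin A)).le_opNorm v

section
variable {ι κ : Type*} [Fintype ι]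

lemma of_one_mulVec {R : Type*} [NonAssocSemiring R] (v : ι → R) :
    (of fun (_ : κ) (_ : ι) => (1 : R)) *ᵥ v = fun _ => ∑ i, v i := by
  ext; simp [mulVec, dotProduct]

lemma norm_toLp_const (c : ℝ) :
    ‖(WithLp.toLp 2 (fun _ => c) : EuclideanSpace ℝ ι)‖ = √(Fintype.card ι) * |c| := by
  simp [EuclideanSpace.norm_eq, Real.sqrt_sq_eq_abs]

lemma abs_sum_le_sqrt_card_mul_norm (v : EuclideanSpace ℝ ι) :
    |∑ i, v i| ≤ √(Fintype.card ι) * ‖v‖ := by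
  rw [EuclideanSpace.norm_eq, ← Real.sqrt_mul (by positivity), ← Real.sqrt_sq_eq_abs]
  gcongr
  simpa using sq_sum_le_card_mul_sum_sq (s := Finset.univ) (f := fun i => v i)

end

section
variable {ι : Type*} [Fintype ι] [DecidableEq ι]

lemma isUnit_det_of_mul_norm_le_norm_mulVec {A : Matrix ι ι ℝ} {c : ℝ} (hc : 0 < c)
    (hA : ∀ v : EuclideanSpace ℝ ι, c * ‖v‖ ≤ ‖(WithLp.toLp 2 (A *ᵥ v) : EuclideanSpace ℝ ι)‖) :
    IsUnit A.det := by
  rw [← isUnit_iff_isUnit_det, ← mulVec_injective_iff_isUnit]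
  intro v w hvw
  have hker := hA (WithLp.toLp 2 (v - w))
  rw [WithLp.ofLp_toLp, mulVec_sub, hvw, sub_self, WithLp.toLp_zero, norm_zero] at hker
  have : WithLp.toLp 2 (v - w) = (0 : EuclideanSpace ℝ ι) :=
    norm_le_zero_iff.mp (nonpos_of_mul_nonpos_right hker hc)
  exact sub_eq_zero.mp (congrArg WithLp.ofLp this)

lemma mul_norm_inv_mulVec_le {A : Matrix ι ι ℝ} {c : ℝ} (hc : 0 < c)
    (hA : ∀ v : EuclideanSpace ℝ ι, c * ‖v‖ ≤ ‖(WithLp.toLp 2 (A *ᵥ v) : EuclideanSpace ℝ ι)‖)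
    (w : EuclideanSpace ℝ ι) :
    c * ‖(WithLp.toLp 2 (A⁻¹ *ᵥ w) : EuclideanSpace ℝ ι)‖ ≤ ‖w‖ := by
  simpa [mulVec_mulVec, mul_nonsing_inv _ (isUnit_det_of_mul_norm_le_norm_mulVec hc hA)]
    using hA (WithLp.toLp 2 (A⁻¹ *ᵥ w))

end

def chaoticTrainNTK {n : ℕ} (p s : ℝ) (E : Matrix (Fin n) (Fin n) ℝ) : Matrix (Fin n) (Fin n) ℝ :=
  p • 1 + s • (of (fun _ _ => 1) - 1) + E

def chaoticTestNTK {k n : ℕ} (u : ℝ) (F : Matrix (Fin k) (Fin n) ℝ) : Matrix (Fin k) (Fin n) ℝ :=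
  u • of (fun _ _ => 1) + F

section
variable {n k : ℕ}

lemma chaoticTrainNTK_mulVec (p s : ℝ) (E : Matrix (Fin n) (Fin n) ℝ) (v : Fin n → ℝ) :
    chaoticTrainNTK p s E *ᵥ v = p • v + s • ((fun _ => ∑ i, v i) - v) + E *ᵥ v := by
  simp only [chaoticTrainNTK, add_mulVec, smul_mulVec, sub_mulVec, one_mulVec, of_one_mulVec]

lemma sum_chaoticTrainNTK_mulVec (p s : ℝ) (E : Matrix (Fin n) (Fin n) ℝ) (v : Fin n → ℝ) :
    ∑ i, (chaoticTrainNTK p s E *ᵥ v) i = (p + s * (n - 1)) * ∑ i, v i + ∑ i, (E *ᵥ v) i := by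
  simp only [chaoticTrainNTK_mulVec, Pi.add_apply, Pi.smul_apply, Pi.sub_apply, smul_eq_mul,
    Finset.sum_add_distrib, ← Finset.mul_sum, Finset.sum_sub_distrib, Finset.sum_const,
    Finset.card_univ, Fintype.card_fin, nsmul_eq_mul]
  ring

lemma norm_toLp_sum_le (v : EuclideanSpace ℝ (Fin n)) :
    ‖(WithLp.toLp 2 (fun _ => ∑ i, v i) : EuclideanSpace ℝ (Fin n))‖ ≤ n * ‖v‖ := by
  rw [norm_toLp_const, Fintype.card_fin]
  calc √n * |∑ i, v i| ≤ √n * (√n * ‖v‖) := by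
        gcongr; simpa using abs_sum_le_sqrt_card_mul_norm v
    _ = n * ‖v‖ := by rw [← mul_assoc, Real.mul_self_sqrt n.cast_nonneg]

lemma sub_mul_norm_le_norm_chaoticTrainNTK_mulVec (p s : ℝ) (E : Matrix (Fin n) (Fin n) ℝ)
    (v : EuclideanSpace ℝ (Fin n)) :
    (p - |s| * (n + 1) - euclideanOpNorm E) * ‖v‖
      ≤ ‖(WithLp.toLp 2 (chaoticTrainNTK p s E *ᵥ v) : EuclideanSpace ℝ (Fin n))‖ := by
  set w : EuclideanSpace ℝ (Fin n) := WithLp.toLp 2 (fun _ => ∑ i, v i) - v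
  set Ev : EuclideanSpace ℝ (Fin n) := WithLp.toLp 2 (E *ᵥ v)
  have hdecomp : (WithLp.toLp 2 (chaoticTrainNTK p s E *ᵥ v) : EuclideanSpace ℝ (Fin n))
      = p • v + (s • w + Ev) := by
    rw [chaoticTrainNTK_mulVec, ← add_assoc]; rfl
  have hw : ‖w‖ ≤ (n + 1) * ‖v‖ := by
    linarith [norm_sub_le (WithLp.toLp 2 (fun _ => ∑ i, v i) : EuclideanSpace ℝ (Fin n)) v,
      norm_toLp_sum_le v]
  have hrest : ‖s • w + Ev‖ ≤ |s| * ((n + 1) * ‖v‖) + euclideanOpNorm E * ‖v‖ := by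
    grw [norm_add_le, norm_smul, Real.norm_eq_abs, hw, norm_toLp_mulVec_le E v]
  have hpv : p * ‖v‖ ≤ ‖p • v‖ := by
    rw [norm_smul, Real.norm_eq_abs]; gcongr; exact le_abs_self p
  rw [hdecomp]
  linarith [norm_sub_le_norm_add (p • v) (s • w + Ev)]

lemma norm_chaoticTestNTK_mulVec_le (u : ℝ) (F : Matrix (Fin k) (Fin n) ℝ)
    (v : EuclideanSpace ℝ (Fin n)) :
    ‖(WithLp.toLp 2 (chaoticTestNTK u F *ᵥ v) : EuclideanSpace ℝ (Fin k))‖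
      ≤ |u| * (√k * |∑ i, v i|) + euclideanOpNorm F * ‖v‖ := by
  have hdecomp : (WithLp.toLp 2 (chaoticTestNTK u F *ᵥ v) : EuclideanSpace ℝ (Fin k))
      = u • WithLp.toLp 2 (fun _ => ∑ i, v i) + WithLp.toLp 2 (F *ᵥ v) := by
    simp only [chaoticTestNTK, add_mulVec, smul_mulVec, of_one_mulVec]; rfl
  rw [hdecomp]
  grw [norm_add_le, norm_smul, Real.norm_eq_abs, norm_toLp_const, Fintype.card_fin,
    norm_toLp_mulVec_le]

lemma abs_mul_abs_sum_inv_chaoticTrainNTK_mulVec_le (p s : ℝ) (E : Matrix (Fin n) (Fin n) ℝ)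
    (hdet : IsUnit (chaoticTrainNTK p s E).det) (Y : EuclideanSpace ℝ (Fin n))
    (hY : ∑ i, Y i = 0) :
    |p + s * (n - 1)| * |∑ i, ((chaoticTrainNTK p s E)⁻¹ *ᵥ Y) i|
      ≤ √n * (euclideanOpNorm E *
        ‖(WithLp.toLp 2 ((chaoticTrainNTK p s E)⁻¹ *ᵥ Y) : EuclideanSpace ℝ (Fin n))‖) := by
  set x : EuclideanSpace ℝ (Fin n) := WithLp.toLp 2 ((chaoticTrainNTK p s E)⁻¹ *ᵥ Y)
  have hsum := sum_chaoticTrainNTK_mulVec p s E x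
  rw [show chaoticTrainNTK p s E *ᵥ x = Y by simp [x, mulVec_mulVec, mul_nonsing_inv _ hdet],
    hY] at hsum
  calc |p + s * (n - 1)| * |∑ i, x i| = |∑ i, (E *ᵥ x) i| := by
        rw [← abs_mul, eq_neg_of_add_eq_zero_left hsum.symm, abs_neg]
    _ ≤ √n * ‖(WithLp.toLp 2 (E *ᵥ x) : EuclideanSpace ℝ (Fin n))‖ := by
        simpa using abs_sum_le_sqrt_card_mul_norm (WithLp.toLp 2 (E *ᵥ x))
    _ ≤ _ := by grw [norm_toLp_mulVec_le E x]

theorem isUnit_det_and_norm_chaoticTestNTK_mulVec_inv_le {S p s u δ : ℝ}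
    {E : Matrix (Fin n) (Fin n) ℝ} {F : Matrix (Fin k) (Fin n) ℝ}
    (hs : |s| ≤ S) (hu : |u| ≤ S) (hE : euclideanOpNorm E ≤ δ) (hδS : δ ≤ S)
    (hF : euclideanOpNorm F ≤ δ) (hp : 2 * ((n + 2) * S + 1) ≤ p)
    (Y : EuclideanSpace ℝ (Fin n)) (hY : ∑ i, Y i = 0) :
    IsUnit (chaoticTrainNTK p s E).det ∧
      ‖(WithLp.toLp 2 (chaoticTestNTK u F *ᵥ ((chaoticTrainNTK p s E)⁻¹ *ᵥ Y)) :
          EuclideanSpace ℝ (Fin k))‖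
        ≤ 2 * (S * √k * √n + 1) * δ * p⁻¹ * ‖Y‖ := by
  have hS : 0 ≤ S := (abs_nonneg s).trans hs
  have hδ : 0 ≤ δ := (norm_nonneg _).trans hE
  have hnS : 0 ≤ (n + 2) * S := by positivity
  have hsn : |s| * (n + 1) ≤ S * (n + 1) := by gcongr
  have hcoer (v : EuclideanSpace ℝ (Fin n)) :
      p / 2 * ‖v‖ ≤ ‖(WithLp.toLp 2 (chaoticTrainNTK p s E *ᵥ v) : EuclideanSpace ℝ (Fin n))‖ :=
    le_trans (by gcongr; linarith) (sub_mul_norm_le_norm_chaoticTrainNTK_mulVec p s E v)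
  have hp2 : 0 < p / 2 := by linarith
  have hdet := isUnit_det_of_mul_norm_le_norm_mulVec hp2 hcoer
  refine ⟨hdet, ?_⟩
  set x : EuclideanSpace ℝ (Fin n) := WithLp.toLp 2 ((chaoticTrainNTK p s E)⁻¹ *ᵥ Y)
  set σ := ∑ i, x i
  have hx : p / 2 * ‖x‖ ≤ ‖Y‖ := mul_norm_inv_mulVec_le hp2 hcoer Y
  have hmean : p / 2 ≤ |p + s * (n - 1)| := by
    have : |s * (n - 1)| ≤ S * (n + 1) := by
      rw [abs_mul]; gcongr; exact (abs_sub _ _).trans (by simp)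
    linarith [le_abs_self (p + s * (n - 1)), neg_abs_le (s * (n - 1))]
  have hσ : |σ| ≤ √n * (δ * ‖x‖) := by
    have hmeanx : |p + s * (n - 1)| * |σ| ≤ √n * (euclideanOpNorm E * ‖x‖) :=
      abs_mul_abs_sum_inv_chaoticTrainNTK_mulVec_le p s E hdet Y hY
    grw [← hmean, hE] at hmeanx
    exact (le_mul_of_one_le_left (abs_nonneg σ) (by linarith)).trans hmeanx
  calc _ ≤ |u| * (√k * |σ|) + euclideanOpNorm F * ‖x‖ := norm_chaoticTestNTK_mulVec_le u F x
    _ ≤ S * (√k * (√n * (δ * ‖x‖))) + δ * ‖x‖ := by grw [hu, hσ, hF]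
    _ = (S * √k * √n + 1) * δ * ‖x‖ := by ring
    _ ≤ (S * √k * √n + 1) * δ * (2 * p⁻¹ * ‖Y‖) := by
        gcongr
        rw [show 2 * p⁻¹ * ‖Y‖ = (p / 2)⁻¹ * ‖Y‖ by ring, le_inv_mul_iff₀ hp2]
        exact hx
    _ = _ := by ring

end

theorem chaotic_phase_mean_predictor_estimate_general
    (m k : ℕ)
    (Y : EuclideanSpace ℝ (Fin m)) (hY : (∑ i, Y i) = 0)
    (S : ℝ) (hS : 0 ≤ S)
    (p s u δ : ℕ → ℝ)
    (hp : Tendsto p atTop atTop)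
    (hs : ∀ l, |s l| ≤ S) (hu : ∀ l, |u l| ≤ S)
    (hδS : ∀ l, δ l ≤ S)
    (M E : ℕ → Matrix (Fin m) (Fin m) ℝ)
    (T F : ℕ → Matrix (Fin k) (Fin m) ℝ)
    (hM : ∀ l, M l = p l • (1 : Matrix (Fin m) (Fin m) ℝ)
      + s l • (Matrix.of (fun _ _ => (1 : ℝ)) - 1) + E l)
    (hE : ∀ l, euclideanOpNorm (E l) ≤ δ l)
    (hT : ∀ l, T l = u l • Matrix.of (fun (_ : Fin k) (_ : Fin m) => (1 : ℝ)) + F l)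
    (hF : ∀ l, euclideanOpNorm (F l) ≤ δ l) :
    ∃ (C : ℝ) (L : ℕ), ∀ l : ℕ, L ≤ l →
      IsUnit (M l).det ∧
      ‖(show EuclideanSpace ℝ (Fin k) from WithLp.toLp 2 ((T l).mulVec ((M l)⁻¹.mulVec Y)))‖
        ≤ C * (δ l + (p l)⁻¹) * (p l)⁻¹ * ‖Y‖ := by
  obtain ⟨L, hL⟩ :=
    (hp.eventually_ge_atTop (2 * ((m + 2) * S + 1))).exists_forall_of_atTop
  refine ⟨2 * (S * √k * √m + 1), L, fun l hl => ?_⟩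
  have hMl : M l = chaoticTrainNTK (p l) (s l) (E l) := hM l
  have hTl : T l = chaoticTestNTK (u l) (F l) := hT l
  have hpl : 0 < p l := lt_of_lt_of_le (by positivity) (hL l hl)
  obtain ⟨hdet, hbound⟩ := isUnit_det_and_norm_chaoticTestNTK_mulVec_inv_le
    (hs l) (hu l) (hE l) (hδS l) (hF l) (hL l hl) Y hY
  rw [hMl, hTl]
  refine ⟨hdet, hbound.trans ?_⟩
  gcongr
  exact le_add_of_nonneg_right (inv_nonneg.mpr hpl.le)

/-- **Chaotic-phase mean-predictor estimate.**
With centered labels `Y` (`𝟙ᵀY = 0`), `M l = p l • Id + s l • (𝟙𝟙ᵀ - Id) + E l`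
with `p l → ∞`, `|s l|, |u l|, δ l ≤ S`, `‖E l‖ ≤ δ l`, and
`T l = u l • 𝟙_k𝟙_mᵀ + F l` with `‖F l‖ ≤ δ l`, there are `C` and `L` such that
for `l ≥ L` the matrix `M l` is invertible and
`‖T l * (M l)⁻¹ * Y‖ ≤ C * (δ l + (p l)⁻¹) * (p l)⁻¹ * ‖Y‖`. -/
theorem chaotic_phase_mean_predictor_estimate
    (m k : ℕ) (hm : 2 ≤ m) (hk : 1 ≤ k)
    (Y : EuclideanSpace ℝ (Fin m)) (hY : (∑ i, Y i) = 0)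
    (S : ℝ) (hS : 0 ≤ S)
    (p s u δ : ℕ → ℝ)
    (hp : Tendsto p atTop atTop)
    (hs : ∀ l, |s l| ≤ S) (hu : ∀ l, |u l| ≤ S)
    (hδ0 : ∀ l, 0 ≤ δ l) (hδS : ∀ l, δ l ≤ S)
    (M E : ℕ → Matrix (Fin m) (Fin m) ℝ)
    (T F : ℕ → Matrix (Fin k) (Fin m) ℝ)
    (hM : ∀ l, M l = p l • (1 : Matrix (Fin m) (Fin m) ℝ)
      + s l • (Matrix.of (fun _ _ => (1 : ℝ)) - 1) + E l)
    (hE : ∀ l, euclideanOpNorm (E l) ≤ δ l)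
    (hT : ∀ l, T l = u l • Matrix.of (fun (_ : Fin k) (_ : Fin m) => (1 : ℝ)) + F l)
    (hF : ∀ l, euclideanOpNorm (F l) ≤ δ l) :
    ∃ (C : ℝ) (L : ℕ), ∀ l : ℕ, L ≤ l →
      IsUnit (M l).det ∧
      ‖(show EuclideanSpace ℝ (Fin k) from WithLp.toLp 2 ((T l).mulVec ((M l)⁻¹.mulVec Y)))‖
        ≤ C * (δ l + (p l)⁻¹) * (p l)⁻¹ * ‖Y‖ :=
  chaotic_phase_mean_predictor_estimate_general m k Y hY S hS p s u δ hp hs hu hδS M E T F hM hE hT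
    hF
end

section
/- Define g : [−1, 1] → ℝ by g(c) = (√(1 − c²) + c·(π − arccos c)) / π. Then there exist constants C > 0 and ε₀ > 0 such that for all 0 < ε < ε₀: |g(1 − ε) − (1 − ε + (2√2/(3π))·ε^{3/2})| ≤ C·ε^{5/2}. -/
/-!
Put `ε = 2x²`. Then `arccos (1 - ε) = 2 arcsin x` and `√(1 - (1 - ε)²) = 2x√(1 - x²)`, so the
kernel becomes an explicit expression in `x`, `√(1 - x²)` and `arcsin x`. Squeezing these between
the polynomials `1 - x²/2 - x⁴/2 ≤ √(1 - x²) ≤ 1 - x²/2` and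
`x + x³/6 ≤ arcsin x ≤ x + x³/6 + x⁵` (comparing derivatives with `1/√(1 - x²)`) cancels all terms
below order `x⁵`, the `x³` term being `8x³/(3π) = (2√2/(3π)) ε^{3/2}`.
-/

open Real Set

/-- `2𝒯(c)` in the paper: twice the ReLU dual kernel, at correlation `c`. -/
noncomputable def reluDualKernel (c : ℝ) : ℝ :=
  (√(1 - c ^ 2) + c * (π - arccos c)) / π

theorem sqrt_one_sub_le_one_sub_half {t : ℝ} (ht : t ≤ 2) : √(1 - t) ≤ 1 - t / 2 :=
  (sqrt_le_left (by linarith)).2 (by nlinarith [sq_nonneg t])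

theorem one_sub_half_sub_sq_half_le_sqrt_one_sub {t : ℝ} (ht₀ : 0 ≤ t) (ht₁ : t ≤ 1) :
    1 - t / 2 - t ^ 2 / 2 ≤ √(1 - t) := by
  rw [le_sqrt (by nlinarith) (by linarith)]
  have hfactor : 0 ≤ t ^ 2 * ((1 - t) * (3 + t)) := by
    have : 0 ≤ 1 - t := by linarith
    positivity
  nlinarith

theorem one_add_sq_div_two_le_one_div_sqrt {y : ℝ} (hy : y ^ 2 < 1) :
    1 + y ^ 2 / 2 ≤ 1 / √(1 - y ^ 2) := by
  have hs : 0 < √(1 - y ^ 2) := sqrt_pos.2 (by linarith)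
  rw [le_div_iff₀ hs, ← pow_le_one_iff_of_nonneg (by positivity) two_ne_zero, mul_pow,
    sq_sqrt (by linarith)]
  nlinarith [sq_nonneg y, sq_nonneg (y ^ 2)]

theorem one_div_sqrt_le_one_add_sq_div_two_add {y : ℝ} (hy : y ^ 2 ≤ 1 / 4) :
    1 / √(1 - y ^ 2) ≤ 1 + y ^ 2 / 2 + 5 * y ^ 4 := by
  have hs : 0 < √(1 - y ^ 2) := sqrt_pos.2 (by linarith)
  rw [div_le_iff₀ hs, ← one_le_pow_iff_of_nonneg (by positivity) two_ne_zero, mul_pow,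
    sq_sqrt (by linarith)]
  nlinarith [sq_nonneg y, mul_nonneg (pow_nonneg (sq_nonneg y) 2) (sub_nonneg.2 hy),
    mul_nonneg (sq_nonneg y) (sub_nonneg.2 hy)]

theorem add_pow_three_div_six_le_arcsin {x : ℝ} (hx₀ : 0 ≤ x) (hx₁ : x ≤ 1) :
    x + x ^ 3 / 6 ≤ arcsin x := by
  refine image_le_of_deriv_right_le_deriv_boundary (f := fun y ↦ y + y ^ 3 / 6)
    (f' := fun y ↦ 1 + y ^ 2 / 2) (a := 0)
    (by fun_prop) (fun y _ ↦ ?_) (by simp) continuous_arcsin.continuousOn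
    (fun y hy ↦
      (hasDerivAt_arcsin (by linarith [hy.1]) (by linarith [hy.2])).hasDerivWithinAt)
    (fun y hy ↦ ?_) ⟨hx₀, le_rfl⟩
  · exact (((hasDerivAt_id' y).add ((hasDerivAt_pow 3 y).div_const 6)).congr_deriv
      (by ring)).hasDerivWithinAt
  · exact one_add_sq_div_two_le_one_div_sqrt (by nlinarith [hy.1, hy.2])

theorem arcsin_le_add_pow_three_div_six_add_pow_five {x : ℝ} (hx₀ : 0 ≤ x) (hx₁ : x ≤ 1 / 2) :
    arcsin x ≤ x + x ^ 3 / 6 + x ^ 5 := by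
  refine image_le_of_deriv_right_le_deriv_boundary (B := fun y ↦ y + y ^ 3 / 6 + y ^ 5)
    (B' := fun y ↦ 1 + y ^ 2 / 2 + 5 * y ^ 4)
    (a := 0) continuous_arcsin.continuousOn
    (fun y hy ↦
      (hasDerivAt_arcsin (by linarith [hy.1]) (by linarith [hy.2])).hasDerivWithinAt) (by simp)
    (by fun_prop) (fun y _ ↦ ?_) (fun y hy ↦ ?_) ⟨hx₀, le_rfl⟩
  · exact ((((hasDerivAt_id' y).add ((hasDerivAt_pow 3 y).div_const 6)).add
      (hasDerivAt_pow 5 y)).congr_deriv (by ring)).hasDerivWithinAt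
  · exact one_div_sqrt_le_one_add_sq_div_two_add (by nlinarith [hy.1, hy.2])

theorem arccos_one_sub_two_mul_sq {x : ℝ} (hx₀ : 0 ≤ x) (hx₁ : x ≤ 1) :
    arccos (1 - 2 * x ^ 2) = 2 * arcsin x := by
  have hcos : cos (2 * arcsin x) = 1 - 2 * x ^ 2 := by
    rw [cos_two_mul, cos_arcsin, sq_sqrt (by nlinarith)]
    ring
  rw [← hcos, arccos_cos (by linarith [arcsin_nonneg.2 hx₀])
    (by linarith [arcsin_le_pi_div_two x])]

theorem sqrt_one_sub_sq_one_sub_two_mul_sq {x : ℝ} (hx : 0 ≤ x) :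
    √(1 - (1 - 2 * x ^ 2) ^ 2) = 2 * x * √(1 - x ^ 2) := by
  rw [show 1 - (1 - 2 * x ^ 2) ^ 2 = (2 * x) ^ 2 * (1 - x ^ 2) by ring,
    sqrt_mul (sq_nonneg _), sqrt_sq (by linarith)]

theorem reluDualKernel_one_sub_two_mul_sq {x : ℝ} (hx₀ : 0 ≤ x) (hx₁ : x ≤ 1) :
    reluDualKernel (1 - 2 * x ^ 2)
      = (2 * x * √(1 - x ^ 2) + (1 - 2 * x ^ 2) * (π - 2 * arcsin x)) / π := by
  rw [reluDualKernel, sqrt_one_sub_sq_one_sub_two_mul_sq hx₀, arccos_one_sub_two_mul_sq hx₀ hx₁]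

theorem abs_reluDualKernel_one_sub_two_mul_sq_sub_le {x : ℝ} (hx₀ : 0 ≤ x) (hx₁ : x ≤ 1 / 2) :
    |reluDualKernel (1 - 2 * x ^ 2) - (1 - 2 * x ^ 2 + 8 * x ^ 3 / (3 * π))| ≤ 3 * x ^ 5 / π := by
  have hA₁ := add_pow_three_div_six_le_arcsin hx₀ (by linarith)
  have hA₂ := arcsin_le_add_pow_three_div_six_add_pow_five hx₀ hx₁
  have hS₁ := one_sub_half_sub_sq_half_le_sqrt_one_sub (sq_nonneg x) (by nlinarith)
  have hS₂ := sqrt_one_sub_le_one_sub_half (t := x ^ 2) (by nlinarith)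
  have hc : 0 ≤ 1 - 2 * x ^ 2 := by nlinarith
  have hdiff : reluDualKernel (1 - 2 * x ^ 2) - (1 - 2 * x ^ 2 + 8 * x ^ 3 / (3 * π))
      = (2 * x * √(1 - x ^ 2) - 2 * (1 - 2 * x ^ 2) * arcsin x - 8 * x ^ 3 / 3) / π := by
    rw [reluDualKernel_one_sub_two_mul_sq hx₀ (by linarith)]
    field_simp
    ring
  rw [hdiff, abs_div, abs_of_pos pi_pos]
  gcongr
  rw [abs_le]
  constructor <;> nlinarith [mul_le_mul_of_nonneg_left hA₁ hc, mul_le_mul_of_nonneg_left hA₂ hc,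
    mul_le_mul_of_nonneg_left hS₁ hx₀, mul_le_mul_of_nonneg_left hS₂ hx₀, pow_nonneg hx₀ 5,
    pow_nonneg hx₀ 7]

theorem rpow_div_two_eq_sqrt_pow {a : ℝ} (ha : 0 ≤ a) (n : ℕ) : a ^ ((n : ℝ) / 2) = √a ^ n := by
  rw [sqrt_eq_rpow, ← rpow_natCast, ← rpow_mul ha, one_div_mul_eq_div]

theorem two_mul_sq_rpow_div_two {x : ℝ} (hx : 0 ≤ x) (n : ℕ) :
    (2 * x ^ 2) ^ ((n : ℝ) / 2) = √2 ^ n * x ^ n := by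
  rw [rpow_div_two_eq_sqrt_pow (by positivity), sqrt_mul zero_le_two, sqrt_sq hx, mul_pow]

/-- **Asymptotic expansion of the ReLU dual kernel near `c = 1`.**
For `g c = (√(1 - c²) + c * (π - arccos c)) / π` there are `C > 0` and `ε₀ > 0`
with `|g (1 - ε) - (1 - ε + (2√2/(3π)) ε^{3/2})| ≤ C ε^{5/2}` for `0 < ε < ε₀`. -/
theorem relu_dual_kernel_expansion :
    ∃ C > (0 : ℝ), ∃ ε₀ > (0 : ℝ), ∀ ε : ℝ, 0 < ε → ε < ε₀ →
      |(Real.sqrt (1 - (1 - ε) ^ 2)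
          + (1 - ε) * (Real.pi - Real.arccos (1 - ε))) / Real.pi
        - (1 - ε + (2 * Real.sqrt 2 / (3 * Real.pi)) * ε ^ ((3 : ℝ) / 2))|
      ≤ C * ε ^ ((5 : ℝ) / 2) := by
  refine ⟨1 / π, by positivity, 1 / 2, by norm_num, fun ε hε hε₀ ↦ ?_⟩
  obtain ⟨x, hx₀, rfl⟩ : ∃ x, 0 ≤ x ∧ ε = 2 * x ^ 2 :=
    ⟨√(ε / 2), sqrt_nonneg _, by rw [sq_sqrt (by linarith)]; ring⟩
  have h2 : √2 ^ 2 = 2 := sq_sqrt zero_le_two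
  have h32 : (2 * x ^ 2) ^ ((3 : ℝ) / 2) = √2 ^ 3 * x ^ 3 := by
    exact_mod_cast two_mul_sq_rpow_div_two hx₀ 3
  have h52 : (2 * x ^ 2) ^ ((5 : ℝ) / 2) = √2 ^ 5 * x ^ 5 := by
    exact_mod_cast two_mul_sq_rpow_div_two hx₀ 5
  have hcoeff : 2 * √2 / (3 * π) * (√2 ^ 3 * x ^ 3) = 8 * x ^ 3 / (3 * π) := by
    field_simp
    linear_combination (2 * √2 ^ 2 + 4) * x ^ 3 * h2
  calc _ = |reluDualKernel (1 - 2 * x ^ 2) - (1 - 2 * x ^ 2 + 8 * x ^ 3 / (3 * π))| := by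
        rw [h32, hcoeff, reluDualKernel]
    _ ≤ 3 * x ^ 5 / π := abs_reluDualKernel_one_sub_two_mul_sq_sub_le hx₀ (by nlinarith)
    _ ≤ 1 / π * (2 * x ^ 2) ^ ((5 : ℝ) / 2) := by
        rw [h52, one_div_mul_eq_div]
        gcongr
        rw [show √2 ^ 5 = (√2 ^ 2) ^ 2 * √2 by ring, h2]
        linarith [one_lt_sqrt_two]
end
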